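/- Let (Ω, μ) be a probability space and let R, Z, W, T be random variables on Ω, each taking values in a finite (or countable, finitely supported) set, with T real-valued. Let f be a function from the range of R to ℝ and define the random variable G = f(R) + T. Then the conditional Shannon entropy of G given the pair (W, Z) satisfies H(G ∣ W, Z) ≤ H(R) − I(Z ; R) + H(T ∣ W, Z), where H denotes Shannon entropy, H(· ∣ ·) conditional Shannon entropy, and I(· ; ·) mutual information. -/

import Mathlib

/-!
Since `G` is a function of the pair `(f(R), T)`, data processing and subadditivity of conditional
entropy give `H(G ∣ W, Z) ≤ H(f(R) ∣ W, Z) + H(T ∣ W, Z)`. Data processing again and dropping `W`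
from the conditioning bound the first term by `H(R ∣ Z)`, and the chain rule, applied to `(R, Z)`
in both orders, shows `H(R ∣ Z) = H(R) − I(R ; Z) = H(R) − I(Z ; R)`.
-/

open MeasureTheory ProbabilityTheory

/-- Shannon entropy of a discrete random variable:
`H(X) = −∑_x P(X = x) log P(X = x)`. -/
noncomputable def entropy {Ω S : Type*} [MeasurableSpace Ω] (μ : Measure Ω) (X : Ω → S) : ℝ :=
  ∑' s : S, Real.negMulLog ((μ (X ⁻¹' {s})).toReal)

/-- Conditional Shannon entropy: `H(X ∣ Y) = ∑_y P(Y = y) H(X ∣ Y = y)`. -/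
noncomputable def condEntropy {Ω S T : Type*} [MeasurableSpace Ω] (μ : Measure Ω)
    (X : Ω → S) (Y : Ω → T) : ℝ :=
  ∑' t : T, ((μ (Y ⁻¹' {t})).toReal) * entropy (μ[|Y ⁻¹' {t}]) X

/-- Mutual information: `I(X ; Y) = H(X) − H(X ∣ Y)`. -/
noncomputable def mutualInfo {Ω S T : Type*} [MeasurableSpace Ω] (μ : Measure Ω)
    (X : Ω → S) (Y : Ω → T) : ℝ :=
  entropy μ X - condEntropy μ X Y

lemma Real.negMulLog_sum_le {ι : Type*} (F : Finset ι) (p : ι → ℝ) (hp : ∀ i ∈ F, 0 ≤ p i) :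
    Real.negMulLog (∑ i ∈ F, p i) ≤ ∑ i ∈ F, Real.negMulLog (p i) := by
  simp only [Real.negMulLog_eq_neg, Finset.sum_mul, ← Finset.sum_neg_distrib]
  refine Finset.sum_le_sum fun i hi => ?_
  rcases (hp i hi).eq_or_lt with h0 | h0
  · simp [← h0]
  · have : Real.log (p i) ≤ Real.log (∑ j ∈ F, p j) :=
      Real.log_le_log h0 (Finset.single_le_sum hp hi)
    nlinarith

section Entropy

variable {Ω S U V : Type*} [MeasurableSpace Ω] {ν : Measure Ω}

lemma sum_measureReal_inter_fiber [IsFiniteMeasure ν] [MeasurableSpace U]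
    [MeasurableSingletonClass U] {Y : Ω → U} (hY : Measurable Y) {F : Finset U}
    (hF : Set.range Y ⊆ F) (A : Set Ω) :
    ∑ t ∈ F, ν.real (Y ⁻¹' {t} ∩ A) = ν.real A := by
  have hfib : ∀ t ∈ F, MeasurableSet (Y ⁻¹' {t}) := fun t _ => hY (measurableSet_singleton t)
  have hcover : Y ⁻¹' F = Set.univ := Set.eq_univ_of_forall fun ω => hF ⟨ω, rfl⟩
  rw [← measureReal_restrict_apply_univ, ← hcover,
    ← sum_measureReal_preimage_singleton (μ := ν.restrict A) F hfib]
  exact Finset.sum_congr rfl fun t ht => (measureReal_restrict_apply (hfib t ht)).symm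

lemma measureReal_mul_cond [IsFiniteMeasure ν] {E : Set Ω} (hE : MeasurableSet E) (A : Set Ω) :
    ν.real E * (ν[|E]).real A = ν.real (E ∩ A) := by
  simp only [measureReal_def, ← ENNReal.toReal_mul, mul_comm (ν E), cond_mul_eq_inter hE]

lemma entropy_eq_sum (ν : Measure Ω) {X : Ω → S} {F : Finset S} (hF : Set.range X ⊆ F) :
    entropy ν X = ∑ s ∈ F, Real.negMulLog (ν.real (X ⁻¹' {s})) := by
  refine tsum_eq_sum fun s hs => ?_
  have : X ⁻¹' {s} = ∅ := Set.eq_empty_of_forall_notMem fun ω hω => hs (hω ▸ hF ⟨ω, rfl⟩)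
  simp [this]

lemma condEntropy_eq_sum (ν : Measure Ω) (X : Ω → S) {Y : Ω → U} {F : Finset U}
    (hF : Set.range Y ⊆ F) :
    condEntropy ν X Y = ∑ t ∈ F, ν.real (Y ⁻¹' {t}) * entropy (ν[|Y ⁻¹' {t}]) X := by
  refine tsum_eq_sum fun t ht => ?_
  have : Y ⁻¹' {t} = ∅ := Set.eq_empty_of_forall_notMem fun ω hω => ht (hω ▸ hF ⟨ω, rfl⟩)
  simp [this]

lemma sum_negMulLog_measureReal_inter [IsFiniteMeasure ν] [MeasurableSpace S]
    [MeasurableSingletonClass S] {X : Ω → S} (hX : Measurable X)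
    {F : Finset S} (hF : Set.range X ⊆ F) {E : Set Ω} (hE : MeasurableSet E) :
    ∑ s ∈ F, Real.negMulLog (ν.real (E ∩ X ⁻¹' {s})) =
      Real.negMulLog (ν.real E) + ν.real E * entropy (ν[|E]) X := by
  simp only [entropy_eq_sum _ hF, Finset.mul_sum, ← measureReal_mul_cond hE, Real.negMulLog_mul,
    Finset.sum_add_distrib, ← Finset.sum_mul]
  congr 1
  rcases eq_or_ne (ν E) 0 with hE0 | hE0
  · simp [measureReal_def, hE0]
  · have := cond_isProbabilityMeasure (μ := ν) hE0
    simpa using congrArg (· * Real.negMulLog (ν.real E))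
      (sum_measureReal_inter_fiber (ν := ν[|E]) hX hF Set.univ)

lemma entropy_pair_eq_add_condEntropy [IsFiniteMeasure ν] [MeasurableSpace S]
    [MeasurableSingletonClass S] [MeasurableSpace U] [MeasurableSingletonClass U]
    {X : Ω → S} {Y : Ω → U} (hX : Measurable X) (hY : Measurable Y) (hXf : (Set.range X).Finite)
    (hYf : (Set.range Y).Finite) :
    entropy ν (fun ω => (X ω, Y ω)) = entropy ν Y + condEntropy ν X Y := by
  obtain ⟨FX, hFX⟩ := hXf.exists_finset_coe
  obtain ⟨FY, hFY⟩ := hYf.exists_finset_coe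
  have hF : Set.range (fun ω => (X ω, Y ω)) ⊆ ↑(FX ×ˢ FY) := by
    rw [Finset.coe_product, hFX, hFY]
    exact Set.range_pair_subset X Y
  rw [entropy_eq_sum ν hF, entropy_eq_sum ν hFY.superset, condEntropy_eq_sum ν X hFY.superset,
    Finset.sum_product_right, ← Finset.sum_add_distrib]
  refine Finset.sum_congr rfl fun t _ => ?_
  have hpre : ∀ s, (fun ω => (X ω, Y ω)) ⁻¹' {(s, t)} = Y ⁻¹' {t} ∩ X ⁻¹' {s} := fun s => by
    ext; simp [and_comm]
  simp only [hpre]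
  exact sum_negMulLog_measureReal_inter hX hFX.superset (hY (measurableSet_singleton t))

lemma condEntropy_le_entropy [IsProbabilityMeasure ν] [MeasurableSpace U]
    [MeasurableSingletonClass U] {X : Ω → S} {Y : Ω → U}
    (hY : Measurable Y) (hXf : (Set.range X).Finite) (hYf : (Set.range Y).Finite) :
    condEntropy ν X Y ≤ entropy ν X := by
  obtain ⟨FX, hFX⟩ := hXf.exists_finset_coe
  obtain ⟨FY, hFY⟩ := hYf.exists_finset_coe
  simp only [condEntropy_eq_sum ν X hFY.superset, entropy_eq_sum _ hFX.superset, Finset.mul_sum]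
  rw [Finset.sum_comm]
  refine Finset.sum_le_sum fun s _ => ?_
  have hweights : ∑ t ∈ FY, ν.real (Y ⁻¹' {t}) = 1 := by
    simpa using sum_measureReal_inter_fiber (ν := ν) hY hFY.superset Set.univ
  have hmix : ∑ t ∈ FY, ν.real (Y ⁻¹' {t}) * (ν[|Y ⁻¹' {t}]).real (X ⁻¹' {s}) =
      ν.real (X ⁻¹' {s}) := by
    simp only [measureReal_mul_cond (hY (measurableSet_singleton _))]
    exact sum_measureReal_inter_fiber hY hFY.superset _
  simpa [hmix] using Real.concaveOn_negMulLog.le_map_sum (t := FY)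
    (p := fun t => (ν[|Y ⁻¹' {t}]).real (X ⁻¹' {s}))
    (fun _ _ => measureReal_nonneg) hweights (fun _ _ => Set.mem_Ici.2 measureReal_nonneg)

lemma entropy_comp_le [IsFiniteMeasure ν] [MeasurableSpace S] [MeasurableSingletonClass S]
    {X : Ω → S} (hX : Measurable X) (hXf : (Set.range X).Finite) (g : S → U) :
    entropy ν (fun ω => g (X ω)) ≤ entropy ν X := by
  classical
  obtain ⟨FX, hFX⟩ := hXf.exists_finset_coe
  have hFU : Set.range (fun ω => g (X ω)) ⊆ ↑(FX.image g) := by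
    rintro _ ⟨ω, rfl⟩
    exact Finset.mem_image_of_mem g (hFX.superset ⟨ω, rfl⟩)
  rw [entropy_eq_sum ν hFU, entropy_eq_sum ν hFX.superset,
    ← Finset.sum_fiberwise_of_maps_to fun s hs => Finset.mem_image_of_mem g hs]
  refine Finset.sum_le_sum fun u _ => ?_
  have hfiber : ν.real ((fun ω => g (X ω)) ⁻¹' {u}) =
      ∑ s ∈ FX with g s = u, ν.real (X ⁻¹' {s}) := by
    rw [sum_measureReal_preimage_singleton _ fun s _ => hX (measurableSet_singleton s)]
    congr 1
    ext ω
    have hω : X ω ∈ FX := Finset.mem_coe.1 (hFX.superset ⟨ω, rfl⟩)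
    simp [hω]
  rw [hfiber]
  exact Real.negMulLog_sum_le _ _ fun _ _ => measureReal_nonneg

lemma condEntropy_comp_le [IsFiniteMeasure ν] [MeasurableSpace S] [MeasurableSingletonClass S]
    {X : Ω → S} {Y : Ω → U} (hX : Measurable X) (hXf : (Set.range X).Finite)
    (hYf : (Set.range Y).Finite) (g : S → V) :
    condEntropy ν (fun ω => g (X ω)) Y ≤ condEntropy ν X Y := by
  obtain ⟨FY, hFY⟩ := hYf.exists_finset_coe
  rw [condEntropy_eq_sum _ _ hFY.superset, condEntropy_eq_sum _ _ hFY.superset]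
  exact Finset.sum_le_sum fun t _ =>
    mul_le_mul_of_nonneg_left (entropy_comp_le hX hXf g) measureReal_nonneg

lemma entropy_pair_le_add [IsProbabilityMeasure ν] [MeasurableSpace S]
    [MeasurableSingletonClass S] [MeasurableSpace U] [MeasurableSingletonClass U]
    {A : Ω → S} {B : Ω → U} (hA : Measurable A) (hB : Measurable B)
    (hAf : (Set.range A).Finite) (hBf : (Set.range B).Finite) :
    entropy ν (fun ω => (A ω, B ω)) ≤ entropy ν A + entropy ν B := by
  rw [entropy_pair_eq_add_condEntropy hA hB hAf hBf, add_comm]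
  exact add_le_add_left (condEntropy_le_entropy hB hAf hBf) _

lemma condEntropy_pair_le_add [IsProbabilityMeasure ν] [MeasurableSpace S]
    [MeasurableSingletonClass S] [MeasurableSpace U] [MeasurableSingletonClass U]
    {A : Ω → S} {B : Ω → U} {Y : Ω → V} (hA : Measurable A) (hB : Measurable B)
    (hAf : (Set.range A).Finite) (hBf : (Set.range B).Finite) (hYf : (Set.range Y).Finite) :
    condEntropy ν (fun ω => (A ω, B ω)) Y ≤ condEntropy ν A Y + condEntropy ν B Y := by
  obtain ⟨FY, hFY⟩ := hYf.exists_finset_coe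
  simp only [condEntropy_eq_sum _ _ hFY.superset, ← Finset.sum_add_distrib, ← mul_add]
  refine Finset.sum_le_sum fun t _ => ?_
  rcases eq_or_ne (ν (Y ⁻¹' {t})) 0 with h0 | h0
  · simp [measureReal_def, h0]
  · have := cond_isProbabilityMeasure (μ := ν) h0
    exact mul_le_mul_of_nonneg_left (entropy_pair_le_add hA hB hAf hBf) measureReal_nonneg

lemma condEntropy_pair_eq_sum [IsFiniteMeasure ν] [MeasurableSpace U]
    [MeasurableSingletonClass U] [MeasurableSpace V] [MeasurableSingletonClass V]
    (X : Ω → S) {W : Ω → U} {Z : Ω → V} (hW : Measurable W) (hZ : Measurable Z)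
    {FW : Finset U} (hFW : Set.range W ⊆ FW) {FZ : Finset V} (hFZ : Set.range Z ⊆ FZ) :
    condEntropy ν X (fun ω => (W ω, Z ω)) =
      ∑ z ∈ FZ, ν.real (Z ⁻¹' {z}) * condEntropy (ν[|Z ⁻¹' {z}]) X W := by
  have hF : Set.range (fun ω => (W ω, Z ω)) ⊆ ↑(FW ×ˢ FZ) := by
    rw [Finset.coe_product]
    exact (Set.range_pair_subset W Z).trans (Set.prod_mono hFW hFZ)
  rw [condEntropy_eq_sum ν X hF, Finset.sum_product_right]
  refine Finset.sum_congr rfl fun z _ => ?_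
  rw [condEntropy_eq_sum _ X hFW, Finset.mul_sum]
  refine Finset.sum_congr rfl fun w _ => ?_
  have hZz := hZ (measurableSet_singleton z)
  have hpre : (fun ω => (W ω, Z ω)) ⁻¹' {(w, z)} = Z ⁻¹' {z} ∩ W ⁻¹' {w} := by
    ext; simp [and_comm]
  rw [hpre, ← measureReal_mul_cond hZz,
    cond_cond_eq_cond_inter hZz (hW (measurableSet_singleton w)), mul_assoc]

lemma condEntropy_pair_le_condEntropy_snd [IsProbabilityMeasure ν] [MeasurableSpace U]
    [MeasurableSingletonClass U] [MeasurableSpace V] [MeasurableSingletonClass V]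
    {X : Ω → S} {W : Ω → U} {Z : Ω → V} (hW : Measurable W) (hZ : Measurable Z)
    (hXf : (Set.range X).Finite) (hWf : (Set.range W).Finite) (hZf : (Set.range Z).Finite) :
    condEntropy ν X (fun ω => (W ω, Z ω)) ≤ condEntropy ν X Z := by
  obtain ⟨FW, hFW⟩ := hWf.exists_finset_coe
  obtain ⟨FZ, hFZ⟩ := hZf.exists_finset_coe
  rw [condEntropy_pair_eq_sum X hW hZ hFW.superset hFZ.superset,
    condEntropy_eq_sum ν X hFZ.superset]
  refine Finset.sum_le_sum fun z _ => ?_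
  rcases eq_or_ne (ν (Z ⁻¹' {z})) 0 with h0 | h0
  · simp [measureReal_def, h0]
  · have := cond_isProbabilityMeasure (μ := ν) h0
    exact mul_le_mul_of_nonneg_left (condEntropy_le_entropy hW hXf hWf) measureReal_nonneg

lemma entropy_pair_comm (ν : Measure Ω) (X : Ω → S) (Y : Ω → U) :
    entropy ν (fun ω => (X ω, Y ω)) = entropy ν (fun ω => (Y ω, X ω)) := by
  refine ((Equiv.prodComm U S).tsum_eq _).symm.trans (tsum_congr fun p => ?_)
  congr 3
  ext
  simp [Prod.ext_iff, and_comm]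

lemma mutualInfo_comm [IsFiniteMeasure ν] [MeasurableSpace S] [MeasurableSingletonClass S]
    [MeasurableSpace U] [MeasurableSingletonClass U] {X : Ω → S} {Y : Ω → U}
    (hX : Measurable X) (hY : Measurable Y) (hXf : (Set.range X).Finite)
    (hYf : (Set.range Y).Finite) :
    mutualInfo ν X Y = mutualInfo ν Y X := by
  have hXY := entropy_pair_eq_add_condEntropy (ν := ν) hX hY hXf hYf
  have hYX := entropy_pair_eq_add_condEntropy (ν := ν) hY hX hYf hXf
  rw [entropy_pair_comm] at hXY
  simp only [mutualInfo]
  linarith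

end Entropy

/-- **Proposition 1 (abstract form).** For discrete random variables `R, Z, W, T`
(`T` real-valued) on a probability space and any `f : S → ℝ`, with `G = f(R) + T`:
`H(G ∣ W, Z) ≤ H(R) − I(Z ; R) + H(T ∣ W, Z)`. -/
theorem stmt_0 {Ω S 𝒲 𝒵 : Type*} [MeasurableSpace Ω]
    [MeasurableSpace S] [MeasurableSingletonClass S] [Finite S]
    [MeasurableSpace 𝒲] [MeasurableSingletonClass 𝒲] [Finite 𝒲]
    [MeasurableSpace 𝒵] [MeasurableSingletonClass 𝒵] [Finite 𝒵]
    (μ : Measure Ω) [IsProbabilityMeasure μ]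
    (R : Ω → S) (Z : Ω → 𝒵) (W : Ω → 𝒲) (T : Ω → ℝ)
    (hR : Measurable R) (hZ : Measurable Z) (hW : Measurable W) (hT : Measurable T)
    (hTfin : (Set.range T).Finite) (f : S → ℝ) :
    condEntropy μ (fun ω => f (R ω) + T ω) (fun ω => (W ω, Z ω)) ≤
      entropy μ R - mutualInfo μ Z R + condEntropy μ T (fun ω => (W ω, Z ω)) := by
  have hfR : Measurable (fun ω => f (R ω)) := (measurable_of_countable f).comp hR
  have hfRf : (Set.range fun ω => f (R ω)).Finite :=
    (Set.finite_range f).subset (Set.range_comp_subset_range R f)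
  calc condEntropy μ (fun ω => f (R ω) + T ω) (fun ω => (W ω, Z ω))
      ≤ condEntropy μ (fun ω => (f (R ω), T ω)) (fun ω => (W ω, Z ω)) :=
        condEntropy_comp_le (hfR.prodMk hT)
          ((hfRf.prod hTfin).subset (Set.range_pair_subset _ _)) (Set.toFinite _)
          fun p => p.1 + p.2
    _ ≤ condEntropy μ (fun ω => f (R ω)) (fun ω => (W ω, Z ω)) +
          condEntropy μ T (fun ω => (W ω, Z ω)) :=
        condEntropy_pair_le_add hfR hT hfRf hTfin (Set.toFinite _)
    _ ≤ condEntropy μ R (fun ω => (W ω, Z ω)) + condEntropy μ T (fun ω => (W ω, Z ω)) := by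
        gcongr
        exact condEntropy_comp_le hR (Set.toFinite _) (Set.toFinite _) f
    _ ≤ condEntropy μ R Z + condEntropy μ T (fun ω => (W ω, Z ω)) := by
        gcongr
        exact condEntropy_pair_le_condEntropy_snd hW hZ (Set.toFinite _) (Set.toFinite _)
          (Set.toFinite _)
    _ = entropy μ R - mutualInfo μ Z R + condEntropy μ T (fun ω => (W ω, Z ω)) := by
        rw [← mutualInfo_comm hR hZ (Set.toFinite _) (Set.toFinite _), mutualInfo]
        ring
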